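/- arXiv:2602.13225 — 4 statements merged into one kernel-verified Lean document; each statement's English description precedes it below -/
import Mathlib

section
/- Let f : [0,1] → [0,∞) be continuous and p : [0,1] → (1,∞) continuous with 1 < p⁻ ≤ p(t) ≤ p⁺ for all t, and let q satisfy 1 ≤ q < p⁻. Then ∫₀¹ (f(t))^(p(t)/q) dt ≥ 2^(1 - p⁺/q) · ∫₀¹ (f(t))^(p⁻/q) dt − 1. -/
/-!
Pointwise, `c * x ^ a - 1 ≤ x ^ b` for `x ≥ 0`, `c = 2 ^ (1 - p⁺/q) ≤ 1` and `0 ≤ a = p⁻/q ≤ b = p(t)/q`: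
on `x ≤ 1` the left side is at most `0`, and on `x ≥ 1` the power `x ^ ·` is monotone.
Integrating over `[0,1]` gives the claim.
-/

open Set MeasureTheory

theorem Real.rpow_le_one_add_rpow {x a b : ℝ} (hx : 0 ≤ x) (ha : 0 ≤ a) (hab : a ≤ b) :
    x ^ a ≤ 1 + x ^ b := by
  rcases le_total x 1 with hx1 | hx1
  · linarith [Real.rpow_le_one hx hx1 ha, Real.rpow_nonneg hx b]
  · linarith [Real.rpow_le_rpow_of_exponent_le hx1 hab]

theorem Real.mul_rpow_sub_one_le_rpow {x a b c : ℝ} (hc : c ≤ 1) (hx : 0 ≤ x) (ha : 0 ≤ a)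
    (hab : a ≤ b) : c * x ^ a - 1 ≤ x ^ b := by
  linarith [mul_le_of_le_one_left (Real.rpow_nonneg hx a) hc, Real.rpow_le_one_add_rpow hx ha hab]

theorem intervalIntegral.mul_integral_sub_le_integral {g h : ℝ → ℝ} {a b c : ℝ} (hab : a ≤ b)
    (hg : IntervalIntegrable g volume a b) (hh : IntervalIntegrable h volume a b)
    (hgh : ∀ t ∈ Icc a b, c * g t - 1 ≤ h t) :
    c * (∫ t in a..b, g t) - (b - a) ≤ ∫ t in a..b, h t := by
  have hmono := intervalIntegral.integral_mono_on hab
    ((hg.const_mul c).sub intervalIntegrable_const) hh hgh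
  rwa [intervalIntegral.integral_sub (hg.const_mul c) intervalIntegrable_const,
    intervalIntegral.integral_const_mul, intervalIntegral.integral_const, smul_eq_mul,
    mul_one] at hmono

theorem stmt1_general (f p : ℝ → ℝ) (pm pp q : ℝ)
    (hfc : ContinuousOn f (Icc 0 1)) (hf : ∀ t ∈ Icc (0:ℝ) 1, 0 ≤ f t)
    (hp : Continuous p)
    (hpb : ∀ t ∈ Icc (0:ℝ) 1, pm ≤ p t ∧ p t ≤ pp)
    (hq1 : 1 ≤ q) (hq2 : q < pm) :
    (∫ t in (0:ℝ)..1, f t ^ (p t / q)) ≥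
      (2:ℝ) ^ (1 - pp / q) * (∫ t in (0:ℝ)..1, f t ^ (pm / q)) - 1 := by
  have hq0 : 0 < q := by linarith
  have hpm : 0 < pm / q := div_pos (by linarith) hq0
  have hc : (2:ℝ) ^ (1 - pp / q) ≤ 1 := by
    refine Real.rpow_le_one_of_one_le_of_nonpos one_le_two ?_
    rw [sub_nonpos, one_le_div hq0]
    linarith [hpb 0 (left_mem_Icc.2 zero_le_one)]
  have hpt : ∀ t ∈ Icc (0:ℝ) 1, pm / q ≤ p t / q := fun t ht =>
    div_le_div_of_nonneg_right (hpb t ht).1 hq0.le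
  have hint_pm : IntervalIntegrable (fun t => f t ^ (pm / q)) volume 0 1 :=
    (hfc.rpow_const fun _ _ => Or.inr hpm.le).intervalIntegrable_of_Icc zero_le_one
  have hint_p : IntervalIntegrable (fun t => f t ^ (p t / q)) volume 0 1 :=
    (hfc.rpow (hp.div_const q).continuousOn fun t ht => Or.inr (hpm.trans_le (hpt t ht)))
      |>.intervalIntegrable_of_Icc zero_le_one
  simpa using intervalIntegral.mul_integral_sub_le_integral zero_le_one hint_pm hint_p
    fun t ht => Real.mul_rpow_sub_one_le_rpow hc (hf t ht) hpm.le (hpt t ht)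

theorem stmt1 (f p : ℝ → ℝ) (pm pp q : ℝ)
    (hfc : ContinuousOn f (Icc 0 1)) (hf : ∀ t ∈ Icc (0:ℝ) 1, 0 ≤ f t)
    (hp : Continuous p)
    (h1 : 1 < pm) (hpb : ∀ t ∈ Icc (0:ℝ) 1, pm ≤ p t ∧ p t ≤ pp)
    (hq1 : 1 ≤ q) (hq2 : q < pm) :
    (∫ t in (0:ℝ)..1, f t ^ (p t / q)) ≥
      (2:ℝ) ^ (1 - pp / q) * (∫ t in (0:ℝ)..1, f t ^ (pm / q)) - 1 :=
  stmt1_general f p pm pp q hfc hf hp hpb hq1 hq2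
end

section
/- Let b ∈ L¹((0,1]) with b ≥ 0 a.e. and ∫₀¹ b(1−s) ds > 0, let p : [0,1] → ℝ be continuous with 0 < p⁻ ≤ p(t) ≤ p⁺ < ∞, and let u : [0,1] → [0,∞) be continuous with ∫₀¹ b(1−s)(u(s))^(p(s)) ds = ρ for some ρ > 0. Then ‖u‖∞ ≥ (ρ / ∫₀¹ b(1−s) ds)^(1/p⁺) + ε(ρ,b), where ε(ρ,b) := (ρ/∫₀¹ b(1−s) ds)^(1/p⁻) − (ρ/∫₀¹ b(1−s) ds)^(1/p⁺) if (ρ/∫₀¹ b(1−s) ds)^(1/p⁺) < 1, and ε(ρ,b) := 0 otherwise. -/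
/-!
Since `u ≤ M` and `p` takes values in `[p⁻, p⁺]`, every value `u(s)^p(s)` is at most
`max (M^p⁻) (M^p⁺)`, so integrating against the nonnegative weight `b(1 - ·)` gives
`ρ / B ≤ max (M^p⁻) (M^p⁺)`. If `ρ / B < 1` this forces `ρ / B ≤ M^p⁻` (when `M ≥ 1` trivially),
and if `ρ / B ≥ 1` it forces `M ≥ 1` and hence `ρ / B ≤ M^p⁺`; taking roots gives the bound,
whose right-hand side is `(ρ / B)^(1/p⁻)` or `(ρ / B)^(1/p⁺)` according to these two cases.
-/

open Set MeasureTheory Real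

lemma intervalIntegral.integral_mul_le_integral_mul_const {g f : ℝ → ℝ} {a b C : ℝ} (hab : a ≤ b)
    (hg : IntervalIntegrable g volume a b)
    (hgf : IntervalIntegrable (fun x => g x * f x) volume a b)
    (hg0 : ∀ x ∈ Ioo a b, 0 ≤ g x) (hf : ∀ x ∈ Ioo a b, f x ≤ C) :
    ∫ x in a..b, g x * f x ≤ (∫ x in a..b, g x) * C := by
  rw [← intervalIntegral.integral_mul_const]
  exact intervalIntegral.integral_mono_on_of_le_Ioo hab hgf (hg.mul_const C)
    fun x hx => mul_le_mul_of_nonneg_left (hf x hx) (hg0 x hx)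

lemma Real.rpow_le_max_rpow_of_mem_Icc {x q a b : ℝ} (hx : 0 ≤ x) (ha : 0 ≤ a)
    (hq : q ∈ Icc a b) : x ^ q ≤ max (x ^ a) (x ^ b) := by
  rcases le_total x 1 with hx1 | hx1
  · exact le_max_of_le_left (rpow_le_rpow_of_exponent_ge' hx hx1 ha hq.1)
  · exact le_max_of_le_right (rpow_le_rpow_of_exponent_le hx1 hq.2)

lemma Real.rpow_add_ite_lt_one_eq {r a b : ℝ} (hr : 0 ≤ r) (hb : 0 < b) :
    r ^ (1 / b) + (if r ^ (1 / b) < 1 then r ^ (1 / a) - r ^ (1 / b) else 0) =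
      if r < 1 then r ^ (1 / a) else r ^ (1 / b) := by
  simp only [rpow_lt_one_iff' hr (one_div_pos.2 hb)]
  split_ifs <;> ring

lemma Real.ite_rpow_one_div_le_of_le_max_rpow {r M a b : ℝ} (hr : 0 ≤ r) (hM : 0 ≤ M)
    (ha : 0 < a) (hab : a ≤ b) (h : r ≤ max (M ^ a) (M ^ b)) :
    (if r < 1 then r ^ (1 / a) else r ^ (1 / b)) ≤ M := by
  have hb : 0 < b := ha.trans_le hab
  split_ifs with hr1
  · rw [one_div, rpow_inv_le_iff_of_pos hr hM ha]
    rcases le_total M 1 with hM1 | hM1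
    · exact h.trans (max_le le_rfl (rpow_le_rpow_of_exponent_ge' hM hM1 ha.le hab))
    · exact hr1.le.trans (one_le_rpow hM1 ha.le)
  · rw [one_div, rpow_inv_le_iff_of_pos hr hM hb]
    have hM1 : 1 ≤ M := by
      by_contra! hM1
      exact hr1 (h.trans_lt (max_lt (rpow_lt_one hM hM1 ha) (rpow_lt_one hM hM1 hb)))
    exact h.trans (max_le (rpow_le_rpow_of_exponent_le hM1 hab) le_rfl)

theorem stmt2 (b p u : ℝ → ℝ) (pm pp ρ M : ℝ)
    (hb : ∀ s ∈ Ioc (0:ℝ) 1, 0 ≤ b s)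
    (hbint : IntervalIntegrable (fun s => b (1 - s)) volume 0 1)
    (hB : 0 < ∫ s in (0:ℝ)..1, b (1 - s))
    (hp : Continuous p) (hpm : 0 < pm)
    (hpb : ∀ t ∈ Icc (0:ℝ) 1, pm ≤ p t ∧ p t ≤ pp)
    (huc : ContinuousOn u (Icc 0 1)) (hun : ∀ t ∈ Icc (0:ℝ) 1, 0 ≤ u t)
    (hM : IsGreatest (u '' Icc (0:ℝ) 1) M)
    (hρ : 0 < ρ)
    (heq : (∫ s in (0:ℝ)..1, b (1 - s) * u s ^ p s) = ρ) :
    M ≥ (ρ / ∫ s in (0:ℝ)..1, b (1 - s)) ^ (1 / pp) +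
      (if (ρ / ∫ s in (0:ℝ)..1, b (1 - s)) ^ (1 / pp) < 1 then
        (ρ / ∫ s in (0:ℝ)..1, b (1 - s)) ^ (1 / pm)
          - (ρ / ∫ s in (0:ℝ)..1, b (1 - s)) ^ (1 / pp)
      else 0) := by
  have hpmp : pm ≤ pp := (hpb 0 ⟨le_rfl, zero_le_one⟩).1.trans (hpb 0 ⟨le_rfl, zero_le_one⟩).2
  have hM0 : 0 ≤ M := by
    obtain ⟨t, ht, rfl⟩ := hM.1
    exact hun t ht
  have hbound : ∀ s ∈ Icc (0:ℝ) 1, u s ^ p s ≤ max (M ^ pm) (M ^ pp) := fun s hs =>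
    (rpow_le_rpow (hun s hs) (hM.2 (mem_image_of_mem u hs)) (hpm.le.trans (hpb s hs).1)).trans
      (rpow_le_max_rpow_of_mem_Icc hM0 hpm.le (hpb s hs))
  have hint : IntervalIntegrable (fun s => b (1 - s) * u s ^ p s) volume 0 1 := by
    refine hbint.mul_continuousOn ?_
    rw [uIcc_of_le zero_le_one]
    exact huc.rpow hp.continuousOn fun s hs => Or.inr (hpm.trans_le (hpb s hs).1)
  have hρB := heq ▸ intervalIntegral.integral_mul_le_integral_mul_const zero_le_one hbint hint
    (fun s hs => hb _ ⟨by linarith [hs.2], by linarith [hs.1]⟩)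
    (fun s hs => hbound s (Ioo_subset_Icc_self hs))
  rw [ge_iff_le, rpow_add_ite_lt_one_eq (div_pos hρ hB).le (hpm.trans_le hpmp)]
  exact ite_rpow_one_div_le_of_le_max_rpow (div_pos hρ hB).le hM0 hpm hpmp
    ((div_le_iff₀' hB).2 hρB)
end

section
/- For every real a > 1, a·ln(a) + (a+1)·ln(2/(a+1)) > 0. -/
/-! With `f x = x log x`, the expression is `2 * ((f 1 + f a) / 2 - f ((1 + a) / 2))`,
which is positive by strict convexity of `f`. -/

open Real

lemma add_mul_log_half_lt_mul_log_add_mul_log {x y : ℝ} (hx : 0 ≤ x) (hy : 0 ≤ y)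
    (hxy : x ≠ y) :
    (x + y) * log ((x + y) / 2) < x * log x + y * log y := by
  have key := strictConvexOn_mul_log.2 (Set.mem_Ici.2 hx) (Set.mem_Ici.2 hy) hxy
    (by norm_num : (0 : ℝ) < 1 / 2) (by norm_num : (0 : ℝ) < 1 / 2) (by norm_num)
  simp only [smul_eq_mul] at key
  have hmid : 1 / 2 * x + 1 / 2 * y = (x + y) / 2 := by ring
  rw [hmid] at key
  linarith

theorem stmt5 (a : ℝ) (ha : 1 < a) :
    0 < a * Real.log a + (a + 1) * Real.log (2 / (a + 1)) := by
  have hconv := add_mul_log_half_lt_mul_log_add_mul_log zero_le_one (by linarith) ha.ne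
  rw [← inv_div, log_inv]
  rw [log_one, mul_zero, zero_add, add_comm 1 a] at hconv
  linarith
end

section
/- For all real a > 0 it holds that a·ln(a) + (a+1)·ln(2/(a+1)) ≥ 0, with equality if and only if a = 1. -/
/-! The expression is twice the Jensen gap of the strictly convex function `x ↦ x log x`
at the points `a` and `1`, since `log (2 / (a + 1)) = -log ((a + 1) / 2)`. -/

open Real

lemma mul_log_midpoint_lt {x y : ℝ} (hx : 0 ≤ x) (hy : 0 ≤ y) (hxy : x ≠ y) :
    (x + y) / 2 * log ((x + y) / 2) < (x * log x + y * log y) / 2 := by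
  have h := strictConvexOn_mul_log.2 (Set.mem_Ici.2 hx) (Set.mem_Ici.2 hy) hxy
    one_half_pos one_half_pos (add_halves 1)
  simp only [smul_eq_mul] at h
  rw [show 1 / 2 * x + 1 / 2 * y = (x + y) / 2 by ring] at h
  linarith

lemma mul_log_add_mul_log_two_div_eq (a : ℝ) :
    a * log a + (a + 1) * log (2 / (a + 1)) =
      2 * ((a * log a + 1 * log 1) / 2 - (a + 1) / 2 * log ((a + 1) / 2)) := by
  rw [← inv_div, log_inv, log_one]
  ring

lemma mul_log_add_mul_log_two_div_pos {a : ℝ} (ha : 0 ≤ a) (hne : a ≠ 1) :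
    0 < a * log a + (a + 1) * log (2 / (a + 1)) := by
  rw [mul_log_add_mul_log_two_div_eq]
  linarith [mul_log_midpoint_lt ha zero_le_one hne]

theorem stmt7 (a : ℝ) (ha : 0 < a) :
    0 ≤ a * Real.log a + (a + 1) * Real.log (2 / (a + 1)) ∧
      (a * Real.log a + (a + 1) * Real.log (2 / (a + 1)) = 0 ↔ a = 1) := by
  rcases eq_or_ne a 1 with rfl | hne
  · norm_num
  · have hpos := mul_log_add_mul_log_two_div_pos ha.le hne
    exact ⟨hpos.le, fun h => absurd h hpos.ne', fun h => absurd h hne⟩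
end
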